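/- arXiv:math/9912201 — 3 statements merged into one kernel-verified Lean document; each statement's English description precedes it below -/
import Mathlib

section
/- For every t ∈ ℝ and every r > 0, setting T = arctan(t+r) + arctan(t−r) and R = arctan(t+r) − arctan(t−r), one has cos T + cos R > 0, sin T = t·(cos T + cos R), and sin R = r·(cos T + cos R). (Equivalently: the map (T,X) ↦ (sin T, X⃗)/(cos T + X₀), where X = (cos R, ω sin R) with ω = x/|x|, is a left inverse of the Penrose transformation (t,x) ↦ (T, cos R, ω sin R).) -/
/-!
With `a = arctan x` and `b = arctan y` one has `sin a = x cos a` and `sin b = y cos b`, so the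
addition formulas give `cos (a + b) + cos (a - b) = 2 cos a cos b > 0` and
`sin (a ± b) = (x ± y) cos a cos b`. Taking `x = t + r`, `y = t - r` turns `x + y` and `x - y`
into `2t` and `2r`.
-/

open Real

lemma Real.sin_arctan_eq_mul_cos_arctan (x : ℝ) : sin (arctan x) = x * cos (arctan x) := by
  rw [← tan_mul_cos (cos_arctan_pos x).ne', tan_arctan]

lemma Real.cos_add_add_cos_sub (a b : ℝ) : cos (a + b) + cos (a - b) = 2 * cos a * cos b := by
  rw [cos_add, cos_sub]
  ring

lemma Real.cos_add_arctan_add_cos_sub_arctan_pos (x y : ℝ) :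
    0 < cos (arctan x + arctan y) + cos (arctan x - arctan y) := by
  rw [cos_add_add_cos_sub]
  have := cos_arctan_pos x
  have := cos_arctan_pos y
  positivity

lemma Real.two_mul_sin_add_arctan (x y : ℝ) :
    2 * sin (arctan x + arctan y) =
      (x + y) * (cos (arctan x + arctan y) + cos (arctan x - arctan y)) := by
  rw [cos_add_add_cos_sub, sin_add, sin_arctan_eq_mul_cos_arctan x,
    sin_arctan_eq_mul_cos_arctan y]
  ring

lemma Real.two_mul_sin_sub_arctan (x y : ℝ) :
    2 * sin (arctan x - arctan y) =
      (x - y) * (cos (arctan x + arctan y) + cos (arctan x - arctan y)) := by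
  rw [cos_add_add_cos_sub, sin_sub, sin_arctan_eq_mul_cos_arctan x,
    sin_arctan_eq_mul_cos_arctan y]
  ring

/-- **The inverse Penrose transformation is a left inverse (formula (2.5)).**
For `T = arctan(t+r) + arctan(t−r)` and `R = arctan(t+r) − arctan(t−r)` one has
`cos T + cos R > 0`, `sin T = t (cos T + cos R)` and `sin R = r (cos T + cos R)`. -/
theorem penrose_left_inverse :
    ∀ (t r : ℝ), 0 < r →
      0 < Real.cos (Real.arctan (t + r) + Real.arctan (t - r)) +
          Real.cos (Real.arctan (t + r) - Real.arctan (t - r)) ∧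
      Real.sin (Real.arctan (t + r) + Real.arctan (t - r)) =
        t * (Real.cos (Real.arctan (t + r) + Real.arctan (t - r)) +
          Real.cos (Real.arctan (t + r) - Real.arctan (t - r))) ∧
      Real.sin (Real.arctan (t + r) - Real.arctan (t - r)) =
        r * (Real.cos (Real.arctan (t + r) + Real.arctan (t - r)) +
          Real.cos (Real.arctan (t + r) - Real.arctan (t - r))) := by
  intro t r _
  have hT := two_mul_sin_add_arctan (t + r) (t - r)
  have hR := two_mul_sin_sub_arctan (t + r) (t - r)
  refine ⟨cos_add_arctan_add_cos_sub_arctan_pos _ _, ?_, ?_⟩ <;> linarith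
end

section
/- For every pair of real numbers 0 < a ≤ b there is a constant C ≥ 1 such that for all t ≥ 0 and all r ∈ [a,b], setting T = arctan(t+r) + arctan(t−r) and R = arctan(t+r) − arctan(t−r), one has: C^{−1}(π − T)² ≤ R ≤ C(π − T)². (Since the geodesic distance on S³ from the point X = (cos R, ω sin R) to the north pole 𝟏 = (1,0,0,0) equals R, this says that for points (T,X) on the image of [0,∞) × ∂𝒦 under the Penrose transformation, dist_{S³}(X,𝟏) is comparable to (π − T)².) -/
open Real

/-- Lower bound on arctan differences via the minimum of the derivative on `[-K, K]`. -/
lemma arctan_sub_ge (K v u : ℝ) (hv : -K ≤ v) (hvu : v ≤ u) (hu : u ≤ K) :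
    (u - v) / (1 + K ^ 2) ≤ Real.arctan u - Real.arctan v := by
  have hK2 : (0:ℝ) < 1 + K ^ 2 := by positivity
  have hmono : MonotoneOn (fun x => Real.arctan x - x / (1 + K ^ 2)) (Set.Icc (-K) K) := by
    have hd : ∀ x : ℝ, HasDerivAt (fun x => Real.arctan x - x / (1 + K ^ 2))
        (1 / (1 + x ^ 2) - 1 / (1 + K ^ 2)) x := fun x =>
      (Real.hasDerivAt_arctan x).sub ((hasDerivAt_id x).div_const _)
    apply monotoneOn_of_deriv_nonneg (convex_Icc _ _)
    · exact fun x _ => ((hd x).continuousAt).continuousWithinAt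
    · exact fun x _ => ((hd x).differentiableAt).differentiableWithinAt
    · intro x hx
      rw [interior_Icc, Set.mem_Ioo] at hx
      rw [(hd x).deriv]
      have hx2 : x ^ 2 ≤ K ^ 2 := sq_le_sq' hx.1.le hx.2.le
      have : (0:ℝ) < 1 + x ^ 2 := by positivity
      rw [sub_nonneg]
      exact one_div_le_one_div_of_le this (by linarith)
  have h1 : v ∈ Set.Icc (-K) K := ⟨hv, hvu.trans hu⟩
  have h2 : u ∈ Set.Icc (-K) K := ⟨hv.trans hvu, hu⟩
  have h3 : Real.arctan v - v / (1 + K ^ 2) ≤ Real.arctan u - u / (1 + K ^ 2) :=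
    hmono h1 h2 hvu
  have heq : (u - v) / (1 + K ^ 2) = u / (1 + K ^ 2) - v / (1 + K ^ 2) := by ring
  rw [heq]; linarith

/-- Upper bound on arctan differences via the maximum of the derivative on `[v, u]`, `v ≥ 0`. -/
lemma arctan_sub_le (v u : ℝ) (hv : 0 ≤ v) (hvu : v ≤ u) :
    Real.arctan u - Real.arctan v ≤ (u - v) / (1 + v ^ 2) := by
  have hv2 : (0:ℝ) < 1 + v ^ 2 := by positivity
  have hmono : MonotoneOn (fun x => x / (1 + v ^ 2) - Real.arctan x) (Set.Icc v u) := by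
    have hd : ∀ x : ℝ, HasDerivAt (fun x => x / (1 + v ^ 2) - Real.arctan x)
        (1 / (1 + v ^ 2) - 1 / (1 + x ^ 2)) x := fun x =>
      ((hasDerivAt_id x).div_const _).sub (Real.hasDerivAt_arctan x)
    apply monotoneOn_of_deriv_nonneg (convex_Icc _ _)
    · exact fun x _ => ((hd x).continuousAt).continuousWithinAt
    · exact fun x _ => ((hd x).differentiableAt).differentiableWithinAt
    · intro x hx
      rw [interior_Icc, Set.mem_Ioo] at hx
      rw [(hd x).deriv]
      have hxv : v ^ 2 ≤ x ^ 2 := by nlinarith [hx.1, hv]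
      have : (0:ℝ) < 1 + x ^ 2 := by positivity
      rw [sub_nonneg]
      exact one_div_le_one_div_of_le hv2 (by linarith)
  have h3 : v / (1 + v ^ 2) - Real.arctan v ≤ u / (1 + v ^ 2) - Real.arctan u :=
    hmono (Set.left_mem_Icc.mpr hvu) (Set.right_mem_Icc.mpr hvu) hvu
  have heq : (u - v) / (1 + v ^ 2) = u / (1 + v ^ 2) - v / (1 + v ^ 2) := by ring
  rw [heq]; linarith

set_option maxHeartbeats 1000000 in
/-- **Degeneration rate of the transformed boundary (formula (2.12)/(2.14)).**
On the Penrose image of `{(t, rω) : t ≥ 0, a ≤ r ≤ b}`, the spherical distance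
`R = dist_{S³}(X, 𝟏)` is comparable to `(π − T)²`. -/
theorem boundary_degeneration (a b : ℝ) (ha : 0 < a) (hab : a ≤ b) :
    ∃ C : ℝ, 1 ≤ C ∧ ∀ t : ℝ, 0 ≤ t → ∀ r ∈ Set.Icc a b,
      C⁻¹ * (Real.pi - (Real.arctan (t + r) + Real.arctan (t - r)))^2 ≤
        Real.arctan (t + r) - Real.arctan (t - r) ∧
      Real.arctan (t + r) - Real.arctan (t - r) ≤
        C * (Real.pi - (Real.arctan (t + r) + Real.arctan (t - r)))^2 := by
  have hb : 0 < b := ha.trans_le hab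
  have hpi : (0:ℝ) < Real.pi := Real.pi_pos
  have hpi3 : (3:ℝ) < Real.pi := Real.pi_gt_three
  set K : ℝ := 1 + 2 * b with hK
  have hK1 : (1:ℝ) ≤ K := by rw [hK]; linarith only [hb]
  have hK0 : (0:ℝ) < K := by linarith only [hK1]
  set c₁ : ℝ := a / ((1 + K ^ 2) * Real.pi ^ 2) with hc₁
  have hc₁pos : 0 < c₁ := by rw [hc₁]; positivity
  set c₂ : ℝ := 2 + 8 * b with hc₂
  have hc₂2 : 2 ≤ c₂ := by rw [hc₂]; linarith only [hb]
  have hc₂pos : 0 < c₂ := by linarith only [hc₂2]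
  clear_value K c₁ c₂
  refine ⟨4 / c₁ + c₂ + 1, ?_, ?_⟩
  · have h4c : 0 < 4 / c₁ := by positivity
    linarith only [h4c, hc₂2]
  intro t ht r hr
  obtain ⟨hra, hrb⟩ := hr
  have hr0 : 0 < r := ha.trans_le hra
  set u : ℝ := t + r with hu
  set v : ℝ := t - r with hv
  have hvu : v ≤ u := by rw [hu, hv]; linarith only [hr0]
  have huv : u - v = 2 * r := by rw [hu, hv]; ring
  have hu0 : 0 < u := by rw [hu]; linarith only [ht, hr0]
  have hvb : -b ≤ v := by rw [hv]; linarith only [ht, hrb]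
  have hfu_pos : 0 < Real.pi / 2 - Real.arctan u := by
    linarith only [Real.arctan_lt_pi_div_two u]
  have hfv_pos : 0 < Real.pi / 2 - Real.arctan v := by
    linarith only [Real.arctan_lt_pi_div_two v]
  have hfuv : Real.arctan v ≤ Real.arctan u := Real.arctan_strictMono.monotone hvu
  set fv : ℝ := Real.pi / 2 - Real.arctan v with hfv
  set F : ℝ := Real.pi - (Real.arctan u + Real.arctan v) with hF
  have hFfv : fv ≤ F := by
    rw [hF, hfv]; linarith only [Real.arctan_lt_pi_div_two u]
  have hF2fv : F ≤ 2 * fv := by rw [hF, hfv]; linarith only [hfuv]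
  have hfv_lt_pi : fv < Real.pi := by
    have h := Real.neg_pi_div_two_lt_arctan v
    rw [hfv]; linarith only [h]
  have hfvpos : 0 < fv := hfv_pos
  have hF0 : 0 < F := lt_of_lt_of_le hfvpos hFfv
  clear_value u v fv F
  -- the two-sided comparison R ≍ fv²
  have key : c₁ * fv ^ 2 ≤ Real.arctan u - Real.arctan v ∧
      Real.arctan u - Real.arctan v ≤ c₂ * fv ^ 2 := by
    rcases le_or_gt v 1 with hv1 | hv1
    · -- bounded case: v ≤ 1
      have huK : u ≤ K := by
        have htle : t ≤ 1 + r := by rw [hv] at hv1; linarith only [hv1]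
        rw [hu, hK]; linarith only [htle, hrb]
      have hvK : -K ≤ v := by linarith only [hvb, hK, hb]
      have hlow := arctan_sub_ge K v u hvK hvu (by linarith only [huK])
      rw [huv] at hlow
      have hK2pos : (0:ℝ) < 1 + K ^ 2 := by positivity
      have hfv14 : Real.pi / 4 ≤ fv := by
        have h := Real.arctan_strictMono.monotone hv1
        rw [Real.arctan_one] at h
        rw [hfv]; linarith only [h]
      constructor
      · have h1 : fv ^ 2 ≤ Real.pi ^ 2 :=
          pow_le_pow_left₀ hfvpos.le hfv_lt_pi.le 2
        have h2 : c₁ * fv ^ 2 ≤ a / (1 + K ^ 2) := by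
          rw [hc₁, div_mul_eq_mul_div, div_le_div_iff₀ (by positivity) hK2pos]
          have hm := mul_le_mul_of_nonneg_left h1
            (show (0:ℝ) ≤ a * (1 + K ^ 2) by positivity)
          linarith only [hm]
        have h3 : a / (1 + K ^ 2) ≤ 2 * r / (1 + K ^ 2) := by
          gcongr
          linarith only [hra, hr0]
        linarith only [h2, h3, hlow]
      · have h1 : Real.arctan u - Real.arctan v ≤ fv := by
          rw [hfv]; linarith only [Real.arctan_lt_pi_div_two u]
        have h2 : fv ≤ (4 / Real.pi) * fv ^ 2 := by
          rw [div_mul_eq_mul_div, le_div_iff₀ hpi]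
          have hm := mul_le_mul_of_nonneg_left
            (show Real.pi ≤ 4 * fv by linarith only [hfv14]) hfvpos.le
          linarith only [hm]
        have h3 : (4 / Real.pi) * fv ^ 2 ≤ c₂ * fv ^ 2 := by
          have h5 : (2:ℝ) * 3 ≤ c₂ * Real.pi :=
            mul_le_mul hc₂2 hpi3.le (by norm_num) hc₂pos.le
          have h4 : 4 / Real.pi ≤ c₂ := by
            rw [div_le_iff₀ hpi]
            linarith only [h5]
          exact mul_le_mul_of_nonneg_right h4 (sq_nonneg fv)
        linarith only [h1, h2, h3]
    · -- unbounded case: v > 1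
      have hv0 : 0 < v := by linarith only [hv1]
      have hfv_eq : fv = Real.arctan v⁻¹ := by
        rw [hfv, Real.arctan_inv_of_pos hv0]
      have hvinv : 0 < v⁻¹ := by positivity
      have hvinv1 : v⁻¹ ≤ 1 := by
        rw [inv_le_one_iff₀]; right; linarith only [hv1]
      have hfv_le : fv ≤ v⁻¹ := by
        have h := arctan_sub_le 0 v⁻¹ le_rfl hvinv.le
        rw [Real.arctan_zero] at h
        norm_num at h
        rw [hfv_eq]
        linarith only [h]
      have hfv_ge : v⁻¹ / 2 ≤ fv := by
        have h := arctan_sub_ge 1 0 v⁻¹ (by norm_num) hvinv.le hvinv1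
        rw [Real.arctan_zero] at h
        norm_num at h
        rw [hfv_eq]
        linarith only [h]
      have hv2pos : (0:ℝ) < v ^ 2 := by positivity
      have hfvv1 : fv * v ≤ 1 := by
        have hm := mul_le_mul_of_nonneg_right hfv_le hv0.le
        rwa [inv_mul_cancel₀ (ne_of_gt hv0)] at hm
      have hfvvpos : 0 < fv * v := mul_pos hfvpos hv0
      have hfv2_le : fv ^ 2 * v ^ 2 ≤ 1 := by
        nlinarith only [hfvv1, hfvvpos]
      constructor
      · -- lower bound
        have hlow := arctan_sub_ge u v u (by linarith only [hvu, hu0, hv0]) hvu le_rfl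
        rw [huv] at hlow
        have hu2pos : (0:ℝ) < 1 + u ^ 2 := by positivity
        have huvK : u ≤ v * K := by
          have hueq : u = v + 2 * r := by rw [hu, hv]; ring
          have hbv : b * 1 ≤ b * v := mul_le_mul_of_nonneg_left hv1.le hb.le
          rw [hueq, hK]; nlinarith only [hbv, hrb]
        have h1 : 1 + u ^ 2 ≤ 2 * v ^ 2 * K ^ 2 := by
          have hu2 := mul_self_le_mul_self hu0.le huvK
          have hvK1 : (1:ℝ) ≤ v * K := by nlinarith only [hv1, hK1]
          have hone := mul_self_le_mul_self (by norm_num : (0:ℝ) ≤ 1) hvK1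
          nlinarith only [hu2, hone]
        have h2 : a / (2 * v ^ 2 * K ^ 2) ≤ 2 * r / (1 + u ^ 2) := by
          apply div_le_div₀ (by positivity) (by linarith only [hra, hr0]) hu2pos h1
        have h3 : c₁ * fv ^ 2 ≤ a / (2 * v ^ 2 * K ^ 2) := by
          rw [hc₁, div_mul_eq_mul_div, div_le_div_iff₀ (by positivity) (by positivity)]
          have hpisq : (2:ℝ) ≤ Real.pi ^ 2 := by nlinarith only [hpi3]
          have hstep : a * fv ^ 2 * (2 * v ^ 2 * K ^ 2) ≤ a * (2 * K ^ 2) := by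
            have hm := mul_le_mul_of_nonneg_left hfv2_le
              (show (0:ℝ) ≤ a * (2 * K ^ 2) by positivity)
            linarith only [hm]
          have hstep2 : a * (2 * K ^ 2) ≤ a * ((1 + K ^ 2) * Real.pi ^ 2) := by
            have hmm : (1 + K ^ 2) * 2 ≤ (1 + K ^ 2) * Real.pi ^ 2 :=
              mul_le_mul_of_nonneg_left hpisq (by positivity)
            have hK2one : (1:ℝ) ≤ K ^ 2 := by nlinarith only [hK1]
            have hm2 := mul_le_mul_of_nonneg_left
              (show (2:ℝ) * K ^ 2 ≤ (1 + K ^ 2) * Real.pi ^ 2 by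
                linarith only [hmm, hK2one]) ha.le
            linarith only [hm2]
          linarith only [hstep, hstep2]
        linarith only [h2, h3, hlow]
      · -- upper bound
        have hup := arctan_sub_le v u hv0.le hvu
        rw [huv] at hup
        have hv2pos' : (0:ℝ) < 1 + v ^ 2 := by positivity
        have h1 : 2 * r / (1 + v ^ 2) ≤ 2 * b / v ^ 2 := by
          apply div_le_div₀ (by positivity) (by linarith only [hrb]) hv2pos
            (by linarith only [])
        have h2 : 2 * b / v ^ 2 ≤ 8 * b * fv ^ 2 := by
          rw [div_le_iff₀ hv2pos]
          have hfvv : 1 / 2 ≤ fv * v := by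
            have e : v⁻¹ / 2 * v = 1 / 2 := by field_simp
            have hmv := mul_le_mul_of_nonneg_right hfv_ge hv0.le
            rw [e] at hmv
            linarith only [hmv]
          have hsq : 1 / 4 ≤ fv ^ 2 * v ^ 2 := by nlinarith only [hfvv]
          have hm := mul_le_mul_of_nonneg_left hsq
            (show (0:ℝ) ≤ 8 * b by positivity)
          linarith only [hm]
        have h3 : 8 * b * fv ^ 2 ≤ c₂ * fv ^ 2 :=
          mul_le_mul_of_nonneg_right (by rw [hc₂]; linarith only []) (sq_nonneg fv)
        linarith only [hup, h1, h2, h3]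
  obtain ⟨hkey1, hkey2⟩ := key
  have hF2 : F ^ 2 ≤ 4 * fv ^ 2 := by nlinarith only [hF2fv, hF0, hfvpos]
  have hfvF2 : fv ^ 2 ≤ F ^ 2 := by nlinarith only [hFfv, hfvpos]
  have hCpos : 0 < 4 / c₁ + c₂ + 1 := by positivity
  constructor
  · have hCinv : (4 / c₁ + c₂ + 1)⁻¹ ≤ c₁ / 4 := by
      rw [← inv_div 4 c₁]
      apply inv_anti₀ (by positivity)
      linarith only [hc₂pos]
    have hstep : (4 / c₁ + c₂ + 1)⁻¹ * F ^ 2 ≤ (c₁ / 4) * (4 * fv ^ 2) :=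
      mul_le_mul hCinv hF2 (sq_nonneg F) (by positivity)
    have he : (c₁ / 4) * (4 * fv ^ 2) = c₁ * fv ^ 2 := by ring
    linarith only [hstep, he, hkey1]
  · have h1 : c₂ * fv ^ 2 ≤ c₂ * F ^ 2 := mul_le_mul_of_nonneg_left hfvF2 hc₂pos.le
    have h2 : c₂ * F ^ 2 ≤ (4 / c₁ + c₂ + 1) * F ^ 2 := by
      have h4c : 0 < 4 / c₁ := by positivity
      exact mul_le_mul_of_nonneg_right (by linarith only [h4c]) (sq_nonneg F)
    linarith only [hkey2, h1, h2]
end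

section
/- Define 𝒬 : {(T,X) ∈ ℝ × ℝ⁴ : cos T + X₀ > 0} → ℝ × ℝ³ by 𝒬(T,X) = ((sin T)/(cos T + X₀), (X₁,X₂,X₃)/(cos T + X₀)). Let e₀,…,e₃ be the standard basis of ℝ⁴. Then for every (T,X) with |X| = 1 and cos T + X₀ > 0, writing (t,x) = 𝒬(T,X): (i) for 1 ≤ k ≤ 3, the Fréchet derivative of 𝒬 at (T,X) applied to (0, X₀ e_k − X_k e₀) equals ( t x_k , ((1 + t² − |x|²)/2) e_k + x_k x ), where now e_k denotes the k-th standard basis vector of ℝ³; and (ii) for 1 ≤ j < k ≤ 3, the Fréchet derivative of 𝒬 at (T,X) applied to (0, X_j e_k − X_k e_j) equals (0, x_j e_k − x_k e_j). (This expresses that the rotation field X₀∂_{X_k} − X_k∂_{X₀} on the Einstein cylinder is pushed forward by the inverse Penrose transformation to ½(1+t²−|x|²)∂_{x_k} + x_k(t∂_t + ⟨x,∂_x⟩), and X_j∂_{X_k} − X_k∂_{X_j} to x_j∂_{x_k} − x_k∂_{x_j}.) -/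
open Real

noncomputable section

abbrev E3 := EuclideanSpace ℝ (Fin 3)
abbrev E4 := EuclideanSpace ℝ (Fin 4)

/-- The (ambient extension of the) inverse Penrose transformation
`𝒬(T,X) = ((sin T)/(cos T + X₀), X⃗/(cos T + X₀))`. -/
def Qmap : ℝ × E4 → ℝ × E3 := fun p =>
  (Real.sin p.1 / (Real.cos p.1 + p.2 0),
    (EuclideanSpace.equiv (Fin 3) ℝ).symm fun i => p.2 i.succ / (Real.cos p.1 + p.2 0))

/-! `𝒬 = D⁻¹ • (sin T, X⃗)` with `D = cos T + X₀`, so by the quotient rule a tangent vector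
`(0, V)` is sent to `D⁻¹ • (0, V⃗) - (V₀ / D) • 𝒬`. For the rotation `X₀ ∂_k - X_k ∂₀` one has
`V₀ = -X_k` and `V⃗ = X₀ e_k`, and on the unit sphere `X₀ / D = (1 + t² - |x|²) / 2`, because
`D² (1 + t² - |x|²) = D² + sin² T - (1 - X₀²) = 2 X₀ D`. The rotations among the spatial
coordinates have `V₀ = 0` and are just rescaled by `D⁻¹`. -/

open ContinuousLinearMap

section SpatialPart

variable {n : ℕ}

def spatialPart : EuclideanSpace ℝ (Fin (n + 1)) →L[ℝ] EuclideanSpace ℝ (Fin n) :=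
  (EuclideanSpace.equiv (Fin n) ℝ).symm.toContinuousLinearMap ∘L
    ContinuousLinearMap.pi fun i => EuclideanSpace.proj i.succ

@[simp]
theorem spatialPart_apply (X : EuclideanSpace ℝ (Fin (n + 1))) (i : Fin n) :
    spatialPart X i = X i.succ :=
  rfl

theorem norm_sq_spatialPart (X : EuclideanSpace ℝ (Fin (n + 1))) :
    ‖spatialPart X‖ ^ 2 = ‖X‖ ^ 2 - X 0 ^ 2 := by
  simp only [EuclideanSpace.norm_sq_eq, Fin.sum_univ_succ (n := n), spatialPart_apply,
    Real.norm_eq_abs, sq_abs]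
  ring

@[simp]
theorem spatialPart_single_succ (k : Fin n) (a : ℝ) :
    spatialPart (EuclideanSpace.single k.succ a) = EuclideanSpace.single k a := by
  ext i
  simp [PiLp.single_apply]

@[simp]
theorem spatialPart_single_zero (a : ℝ) :
    spatialPart (EuclideanSpace.single (0 : Fin (n + 1)) a) = 0 := by
  ext i
  simp [Fin.succ_ne_zero]

end SpatialPart

def penroseDenom (p : ℝ × E4) : ℝ := Real.cos p.1 + p.2 0

theorem Qmap_eq_smul (p : ℝ × E4) :
    Qmap p = (penroseDenom p)⁻¹ • (Real.sin p.1, spatialPart p.2) := by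
  ext <;> simp [Qmap, penroseDenom, div_eq_inv_mul]

theorem Qmap_snd_apply (p : ℝ × E4) (i : Fin 3) :
    (Qmap p).2 i = p.2 i.succ / penroseDenom p :=
  rfl

theorem hasFDerivAt_penroseDenom (p : ℝ × E4) :
    HasFDerivAt penroseDenom
      (-Real.sin p.1 • fst ℝ ℝ E4 + EuclideanSpace.proj 0 ∘L snd ℝ ℝ E4) p :=
  ((Real.hasDerivAt_cos p.1).comp_hasFDerivAt p hasFDerivAt_fst).add
    ((EuclideanSpace.proj (0 : Fin 4) : E4 →L[ℝ] ℝ).hasFDerivAt.comp p hasFDerivAt_snd)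

theorem fderiv_Qmap_apply {p : ℝ × E4} (hp : penroseDenom p ≠ 0) (τ : ℝ) (V : E4) :
    fderiv ℝ Qmap p (τ, V) =
      (penroseDenom p)⁻¹ •
        ((Real.cos p.1 * τ, spatialPart V) - (-Real.sin p.1 * τ + V 0) • Qmap p) := by
  have hnum : HasFDerivAt (fun q : ℝ × E4 => (Real.sin q.1, spatialPart q.2))
      ((Real.cos p.1 • fst ℝ ℝ E4).prod (spatialPart ∘L snd ℝ ℝ E4)) p :=
    ((Real.hasDerivAt_sin p.1).comp_hasFDerivAt p hasFDerivAt_fst).prodMk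
      (spatialPart.hasFDerivAt.comp p hasFDerivAt_snd)
  have hQ := (((hasDerivAt_inv hp).comp_hasFDerivAt p (hasFDerivAt_penroseDenom p)).smul
    hnum).congr_of_eventuallyEq (.of_forall Qmap_eq_smul)
  rw [hQ.fderiv, Qmap_eq_smul]
  refine Prod.ext ?_ ?_ <;>
    simp only [add_apply, smul_apply, smulRight_apply, ContinuousLinearMap.prod_apply, comp_apply,
      coe_fst', coe_snd', Function.comp_apply, PiLp.proj_apply, Prod.fst_add, Prod.snd_add,
      Prod.smul_fst, Prod.smul_snd, Prod.fst_sub, Prod.snd_sub, smul_eq_mul]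
  · ring
  · module

theorem fderiv_Qmap_apply_zero {p : ℝ × E4} (hp : penroseDenom p ≠ 0) (V : E4) :
    fderiv ℝ Qmap p (0, V) =
      (-(V 0 / penroseDenom p) * (Qmap p).1,
        (penroseDenom p)⁻¹ • spatialPart V - (V 0 / penroseDenom p) • (Qmap p).2) := by
  rw [fderiv_Qmap_apply hp]
  refine Prod.ext ?_ ?_ <;>
    simp only [Prod.smul_fst, Prod.smul_snd, Prod.fst_sub, Prod.snd_sub, smul_eq_mul]
  · ring
  · module

theorem one_add_sq_sub_norm_sq_Qmap {p : ℝ × E4} (hp1 : ‖p.2‖ = 1) (hp : penroseDenom p ≠ 0) :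
    1 + (Qmap p).1 ^ 2 - ‖(Qmap p).2‖ ^ 2 = 2 * (p.2 0 / penroseDenom p) := by
  rw [Qmap_eq_smul]
  simp only [Prod.smul_fst, Prod.smul_snd, smul_eq_mul, norm_smul, mul_pow, norm_inv,
    Real.norm_eq_abs, sq_abs, inv_pow, norm_sq_spatialPart, hp1]
  field_simp
  unfold penroseDenom
  linear_combination Real.sin_sq_add_cos_sq p.1

/-- **Pushforwards of the rotation fields under the inverse Penrose transformation
(formulas (2.20), (2.21)).** -/
theorem pushforward_rotations (T : ℝ) (X : E4) (hX : ‖X‖ = 1)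
    (h : 0 < Real.cos T + X 0) :
    (∀ k : Fin 3,
      fderiv ℝ Qmap (T, X)
          ((0:ℝ), X 0 • EuclideanSpace.single k.succ (1:ℝ) -
            X k.succ • EuclideanSpace.single (0 : Fin 4) (1:ℝ)) =
        ((Qmap (T, X)).1 * (Qmap (T, X)).2 k,
          ((1 + (Qmap (T, X)).1^2 - ‖(Qmap (T, X)).2‖^2) / 2) •
              EuclideanSpace.single k (1:ℝ) +
            (Qmap (T, X)).2 k • (Qmap (T, X)).2)) ∧
    ∀ j k : Fin 3, j < k →
      fderiv ℝ Qmap (T, X)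
          ((0:ℝ), X j.succ • EuclideanSpace.single k.succ (1:ℝ) -
            X k.succ • EuclideanSpace.single j.succ (1:ℝ)) =
        ((0:ℝ),
          (Qmap (T, X)).2 j • EuclideanSpace.single k (1:ℝ) -
            (Qmap (T, X)).2 k • EuclideanSpace.single j (1:ℝ)) := by
  have hD : penroseDenom (T, X) ≠ 0 := h.ne'
  refine ⟨fun k => ?_, fun j k _ => ?_⟩
  · have hV₀ : (X 0 • EuclideanSpace.single k.succ 1 -
        X k.succ • EuclideanSpace.single 0 1 : E4) 0 = -X k.succ := by
      simp
    have hV : spatialPart (X 0 • EuclideanSpace.single k.succ (1:ℝ) -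
        X k.succ • EuclideanSpace.single 0 1) = X 0 • EuclideanSpace.single k 1 := by
      simp
    rw [fderiv_Qmap_apply_zero hD, hV₀, hV, one_add_sq_sub_norm_sq_Qmap (p := (T, X)) hX hD,
      Qmap_snd_apply]
    exact Prod.ext (by ring) (by module)
  · have hV₀ : (X j.succ • EuclideanSpace.single k.succ 1 -
        X k.succ • EuclideanSpace.single j.succ 1 : E4) 0 = 0 := by
      simp
    have hV : spatialPart (X j.succ • EuclideanSpace.single k.succ (1:ℝ) -
        X k.succ • EuclideanSpace.single j.succ 1) =
          X j.succ • EuclideanSpace.single k 1 - X k.succ • EuclideanSpace.single j 1 := by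
      simp
    rw [fderiv_Qmap_apply_zero hD, hV₀, hV, Qmap_snd_apply, Qmap_snd_apply]
    exact Prod.ext (by ring) (by module)
end
end
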